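/- Every decomposition of P_G arises from a weight assignment a: [d] → {-1,0,1} of one of exactly two types: (Type I) no vertex has weight 0, every positive edge has weight multiset {1,1}, every negative edge has weight multiset {-1,-1}; or (Type II) at least one vertex has weight 0, every positive edge has weights {1,0}, and every negative edge has weights {-1,0}. -/

import Mathlib

open scoped BigOperators

/-- `ρ(i,j) = e_i + e_j` -/
noncomputable def rho {d : ℕ} (i j : Fin d) : Fin d → ℝ :=
  fun t => (if t = i then 1 else 0) + (if t = j then 1 else 0)

/-- The edge polytope of a graph `G` on `[d]`. -/
noncomputable def edgePolytope {d : ℕ} (G : SimpleGraph (Fin d)) : Set (Fin d → ℝ) :=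
  convexHull ℝ {x | ∃ i j, G.Adj i j ∧ x = rho i j}

/-- dot product -/
def dotp {d : ℕ} (a x : Fin d → ℝ) : ℝ := ∑ t, a t * x t

/-- a polytope is integral if all its vertices (extreme points) are lattice points -/
def IsIntegralSet {d : ℕ} (P : Set (Fin d → ℝ)) : Prop :=
  ∀ x ∈ Set.extremePoints ℝ P, ∀ t, ∃ z : ℤ, x t = (z : ℝ)

/-- The hyperplane `a·x = b` decomposes `P`: it meets the relative interior of `P`,
both open sides meet `P`, and both closed half-space pieces are integral. -/
def Decomposes {d : ℕ} (P : Set (Fin d → ℝ)) (a : Fin d → ℝ) (b : ℝ) : Prop :=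
  (∃ x ∈ intrinsicInterior ℝ P, dotp a x = b) ∧
  (∃ y ∈ P, dotp a y < b) ∧ (∃ y ∈ P, b < dotp a y) ∧
  IsIntegralSet (P ∩ {x | b ≤ dotp a x}) ∧
  IsIntegralSet (P ∩ {x | dotp a x ≤ b})

/-!
If a positive vertex `ρ(i,j)` and a negative vertex `ρ(k,l)` of `P_G` span an exposed segment
with `j ∉ {k, l}`, the hyperplane cuts that segment in a vertex of the positive half whose
`j`-coordinate lies strictly between `0` and `1`. Explicit linear functionals expose such a
segment when the two edges share a vertex, or when an endpoint of one edge has no neighbour on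
the other; so every positive and every negative edge lie on a 4-cycle whose two other edges are
zero edges. Hence all positive edges carry the same weights `{α, β}` and all negative edges
`{-α, -β}`. Composing `a` with `sign` (if `α = β`; connectedness excludes zero weights) or with
the odd function sending `±α` to `±1` and everything else to `0` (if `α ≠ β`, choosing `α ≠ 0`)
multiplies every edge sum by one positive constant, so both halves of `P_G` are unchanged.
-/

section Convex

variable {E : Type*} [AddCommGroup E] [Module ℝ E]

lemma isExtreme_inter_setOf_eq_of_le {A : Set E} {f : E →ₗ[ℝ] ℝ} {M : ℝ}
    (hf : ∀ y ∈ A, f y ≤ M) : IsExtreme ℝ A (A ∩ {y | f y = M}) := by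
  refine ⟨Set.inter_subset_left, fun x₁ hx₁ x₂ hx₂ x ⟨_, hxM⟩ hx => ?_⟩
  obtain ⟨θ₁, θ₂, hθ₁, hθ₂, hθ, rfl⟩ := hx
  have h₁ := hf x₁ hx₁
  have h₂ := hf x₂ hx₂
  simp only [Set.mem_ofPred_eq, map_add, map_smul, smul_eq_mul] at hxM
  refine Set.mem_inter hx₁ ?_
  show f x₁ = M
  refine le_antisymm h₁ (le_of_not_gt fun hlt => ?_)
  have : θ₁ * M + θ₂ * M = M := by rw [← add_mul, hθ, one_mul]
  linarith [mul_lt_mul_of_pos_left hlt hθ₁, mul_le_mul_of_nonneg_left h₂ hθ₂.le]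

lemma LinearMap.injOn_segment {f : E →ₗ[ℝ] ℝ} {v w : E} (hvw : f v ≠ f w) :
    Set.InjOn f (segment ℝ v w) := by
  intro x hx y hy hxy
  rw [segment_eq_image] at hx hy
  obtain ⟨s, -, rfl⟩ := hx
  obtain ⟨t, -, rfl⟩ := hy
  simp only [map_add, map_smul, smul_eq_mul] at hxy
  have : s = t := by
    have : (s - t) * (f w - f v) = 0 := by linarith
    exact sub_eq_zero.1 ((mul_eq_zero.1 this).resolve_right (sub_ne_zero.2 hvw.symm))
  rw [this]

lemma mem_extremePoints_inter_of_face_subset_segment {A : Set E} {f g : E →ₗ[ℝ] ℝ} {M : ℝ}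
    {v w x : E} (hf : ∀ y ∈ A, f y ≤ M) (hface : A ∩ {y | f y = M} ⊆ segment ℝ v w)
    (hgvw : g v ≠ g w) (hx : x ∈ A) (hfx : f x = M) (hgx : g x = 0) :
    x ∈ (A ∩ {y | 0 ≤ g y}).extremePoints ℝ := by
  set B := A ∩ {y | 0 ≤ g y} ∩ {y | f y = M}
  have hB : IsExtreme ℝ (A ∩ {y | 0 ≤ g y}) B :=
    isExtreme_inter_setOf_eq_of_le fun y hy => hf y hy.1
  have hBx : IsExtreme ℝ B (B ∩ {y | (-g) y = 0}) :=
    isExtreme_inter_setOf_eq_of_le fun y hy => by simpa using hy.1.2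
  have hsingleton : B ∩ {y | (-g) y = 0} = {x} := by
    refine Set.eq_singleton_iff_unique_mem.2 ⟨⟨⟨⟨hx, hgx.ge⟩, hfx⟩, by simpa using hgx⟩, ?_⟩
    rintro y ⟨⟨⟨hyA, -⟩, hfy⟩, hgy⟩
    refine LinearMap.injOn_segment hgvw (hface ⟨hyA, hfy⟩) (hface ⟨hx, hfx⟩) ?_
    simp_all
  rw [← isExtreme_singleton, ← hsingleton]
  exact hB.trans hBx

variable [TopologicalSpace E] [T2Space E] [IsTopologicalAddGroup E] [ContinuousSMul ℝ E]
  [LocallyConvexSpace ℝ E]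

lemma convexHull_inter_setOf_eq_subset {S : Set E} (hS : S.Finite) {f : E →L[ℝ] ℝ} {M : ℝ}
    (hf : ∀ s ∈ S, f s ≤ M) :
    convexHull ℝ S ∩ {y | f y = M} ⊆ convexHull ℝ (S ∩ {y | f y = M}) := by
  have hle : ∀ y ∈ convexHull ℝ S, f y ≤ M := fun y hy =>
    convexHull_min hf (convex_halfSpace_le f.isLinear M) hy
  have hext : IsExtreme ℝ (convexHull ℝ S) (convexHull ℝ S ∩ {y | f y = M}) :=
    isExtreme_inter_setOf_eq_of_le (f := (f : E →ₗ[ℝ] ℝ)) hle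
  have hcomp : IsCompact (convexHull ℝ S ∩ {y | f y = M}) :=
    (hS.isCompact_convexHull ℝ).inter_right (isClosed_eq f.continuous continuous_const)
  have hconv : Convex ℝ (convexHull ℝ S ∩ {y | f y = M}) :=
    (convex_convexHull ℝ S).inter (convex_hyperplane f.isLinear M)
  rw [← closure_convexHull_extremePoints hcomp hconv]
  refine closure_minimal (convexHull_mono fun y hy => ⟨?_, (extremePoints_subset hy).2⟩)
    ((hS.subset Set.inter_subset_left).isClosed_convexHull ℝ)
  exact extremePoints_convexHull_subset (hext.extremePoints_subset_extremePoints hy)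

end Convex

section EdgePolytope

variable {d : ℕ} {G : SimpleGraph (Fin d)}

noncomputable def dotpL (a : Fin d → ℝ) : (Fin d → ℝ) →L[ℝ] ℝ :=
  LinearMap.toContinuousLinearMap (dotProductBilin ℝ ℝ a)

@[simp] lemma dotpL_apply (a x : Fin d → ℝ) : dotpL a x = dotp a x := rfl

lemma dotp_neg_left (a x : Fin d → ℝ) : dotp (-a) x = -dotp a x := by
  simp [dotp]

lemma dotp_rho (a : Fin d → ℝ) (i j : Fin d) : dotp a (rho i j) = a i + a j := by
  simp [dotp, rho, mul_add, Finset.sum_add_distrib]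

lemma rho_eq_of_sym2_eq {i j k l : Fin d} (h : s(i, j) = s(k, l)) : rho i j = rho k l := by
  rcases Sym2.eq_iff.1 h with ⟨rfl, rfl⟩ | ⟨rfl, rfl⟩
  · rfl
  · funext t; simp only [rho]; ring

def edgeVertices (G : SimpleGraph (Fin d)) : Set (Fin d → ℝ) :=
  {x | ∃ i j, G.Adj i j ∧ x = rho i j}

lemma edgeVertices_finite : (edgeVertices G).Finite :=
  (Set.finite_range fun p : Fin d × Fin d => rho p.1 p.2).subset
    (by rintro _ ⟨i, j, -, rfl⟩; exact ⟨(i, j), rfl⟩)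

lemma rho_mem_edgePolytope {i j : Fin d} (h : G.Adj i j) : rho i j ∈ edgePolytope G :=
  subset_convexHull ℝ _ ⟨i, j, h, rfl⟩

lemma dotp_le_of_mem_edgePolytope {χ x : Fin d → ℝ} {M : ℝ}
    (hle : ∀ p q, G.Adj p q → χ p + χ q ≤ M) (hx : x ∈ edgePolytope G) : dotp χ x ≤ M :=
  convexHull_min (by rintro _ ⟨p, q, hpq, rfl⟩; simpa [dotp_rho] using hle p q hpq)
    (convex_halfSpace_le (dotpL χ).isLinear M) hx

lemma dotp_eq_mul_of_mem_edgePolytope {a a' x : Fin d → ℝ} {c : ℝ}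
    (h : ∀ p q, G.Adj p q → a' p + a' q = c * (a p + a q)) (hx : x ∈ edgePolytope G) :
    dotp a' x = c * dotp a x := by
  have := convexHull_min (t := {x | (dotpL a' - c • dotpL a) x = 0})
    (by rintro _ ⟨p, q, hpq, rfl⟩; simp [dotp_rho, h p q hpq])
    (convex_hyperplane (dotpL a' - c • dotpL a).isLinear 0) hx
  simpa [sub_eq_zero] using this

/-- On the vertices of `P_G`, `χ ≤ M` with equality at most at `ρ(i,j)` and `ρ(k,l)`. -/
def ExposesSegment (G : SimpleGraph (Fin d)) (χ : Fin d → ℝ) (M : ℝ) (i j k l : Fin d) :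
    Prop :=
  ∀ p q, G.Adj p q → χ p + χ q ≤ M ∧ (χ p + χ q = M → s(p, q) = s(i, j) ∨ s(p, q) = s(k, l))

def IsExposedSegment (G : SimpleGraph (Fin d)) (i j k l : Fin d) : Prop :=
  ∃ (χ : Fin d → ℝ) (M : ℝ), ExposesSegment G χ M i j k l ∧ χ i + χ j = M ∧ χ k + χ l = M

lemma edgePolytope_inter_subset_segment {χ : Fin d → ℝ} {M : ℝ} {i j k l : Fin d}
    (hχ : ExposesSegment G χ M i j k l) :
    edgePolytope G ∩ {y | dotp χ y = M} ⊆ segment ℝ (rho i j) (rho k l) := by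
  rw [← convexHull_pair]
  refine (convexHull_inter_setOf_eq_subset edgeVertices_finite (f := dotpL χ) ?_).trans
    (convexHull_mono ?_)
  · rintro _ ⟨p, q, hpq, rfl⟩
    simpa [dotp_rho] using (hχ p q hpq).1
  · rintro _ ⟨⟨p, q, hpq, rfl⟩, hM⟩
    have hM : χ p + χ q = M := by simpa [dotp_rho] using hM
    rcases (hχ p q hpq).2 hM with h | h
    · exact .inl (rho_eq_of_sym2_eq h)
    · exact .inr (rho_eq_of_sym2_eq h)

/-- The point where the hyperplane `a·x = 0` crosses an exposed segment from a positive to a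
negative vertex is a vertex of the positive half, and its `j`-th coordinate lies in `(0, 1)`. -/
lemma not_isIntegralSet_of_isExposedSegment {a : Fin d → ℝ} {i j k l : Fin d}
    (hij : G.Adj i j) (hkl : G.Adj k l) (hjk : j ≠ k) (hjl : j ≠ l)
    (hs : 0 < a i + a j) (ht : a k + a l < 0) (hexp : IsExposedSegment G i j k l) :
    ¬ IsIntegralSet (edgePolytope G ∩ {x | 0 ≤ dotp a x}) := by
  intro hint
  obtain ⟨χ, M, hχ, hMij, hMkl⟩ := hexp
  set lam := (a i + a j) / (a i + a j - (a k + a l)) with hlam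
  have hlam0 : 0 < lam := div_pos hs (by linarith)
  have hlam1 : lam < 1 := (div_lt_one (by linarith)).2 (by linarith)
  set x := (1 - lam) • rho i j + lam • rho k l
  have hxP : x ∈ edgePolytope G := convex_convexHull ℝ _ (rho_mem_edgePolytope hij)
    (rho_mem_edgePolytope hkl) (by linarith) hlam0.le (by ring)
  have hdotp (b : Fin d → ℝ) : dotp b x = (1 - lam) * (b i + b j) + lam * (b k + b l) := by
    change dotpL b ((1 - lam) • rho i j + lam • rho k l) = _
    simp only [map_add, map_smul, smul_eq_mul, dotpL_apply, dotp_rho]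
  have hχx : dotp χ x = M := by rw [hdotp, hMij, hMkl]; ring
  have hax : dotp a x = 0 := by
    rw [hdotp, hlam]
    field_simp [show a i + a j - (a k + a l) ≠ 0 by linarith]
    ring
  have hsep : dotpL a (rho i j) ≠ dotpL a (rho k l) := by
    simp only [dotpL_apply, dotp_rho]; linarith
  have hext := mem_extremePoints_inter_of_face_subset_segment (f := dotpL χ) (g := dotpL a)
    (fun y hy => dotp_le_of_mem_edgePolytope (fun p q hpq => (hχ p q hpq).1) hy)
    (edgePolytope_inter_subset_segment hχ) hsep hxP hχx hax
  obtain ⟨z, hz⟩ := hint x hext j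
  have hxj : x j = 1 - lam := by simp [x, rho, hij.ne', hjk, hjl]
  have hz0 : (0 : ℤ) < z := by exact_mod_cast (show (0 : ℝ) < z by linarith)
  have hz1 : z < (1 : ℤ) := by exact_mod_cast (show (z : ℝ) < 1 by linarith)
  omega

lemma isExposedSegment_of_adj_of_adj {i j k : Fin d} (hij : G.Adj i j) (hik : G.Adj i k) :
    IsExposedSegment G i j i k := by
  refine ⟨fun v => if v = i then 2 else if v = j then 1 else if v = k then 1 else 0, 3,
    fun p q hpq => ?_, by norm_num [hij.ne'], by norm_num [hik.ne']⟩
  have := hpq.ne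
  have := hij.ne
  have := hik.ne
  dsimp only
  split_ifs <;> subst_vars <;> simp_all <;> norm_num

lemma isExposedSegment_of_not_adj {i j k l : Fin d} (hij : G.Adj i j) (hkl : G.Adj k l)
    (hik : i ≠ k) (hil : i ≠ l) (hjk : j ≠ k) (hjl : j ≠ l)
    (hAjk : ¬ G.Adj j k) (hAjl : ¬ G.Adj j l) : IsExposedSegment G i j k l := by
  refine ⟨fun v => if v = i then 1 else if v = j then 3 else if v = k then 2 else
    if v = l then 2 else 0, 4, fun p q hpq => ?_, ?_, ?_⟩
  · have := hpq.ne
    have := hij.ne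
    have := hkl.ne
    dsimp only
    split_ifs <;> subst_vars <;> norm_num <;> simp_all [G.adj_comm]
  · norm_num [hij.ne']
  · norm_num [hik.symm, hil.symm, hjk.symm, hjl.symm, hkl.ne']

end EdgePolytope

section Combinatorics

variable {d : ℕ} {G : SimpleGraph (Fin d)} {a : Fin d → ℝ} {i j k l : Fin d}

lemma isIntegralSet_neg (h : IsIntegralSet (edgePolytope G ∩ {x | dotp a x ≤ 0})) :
    IsIntegralSet (edgePolytope G ∩ {x | 0 ≤ dotp (-a) x}) := by
  simpa [dotp_neg_left] using h

lemma false_of_adj_of_adj (hint : IsIntegralSet (edgePolytope G ∩ {x | 0 ≤ dotp a x}))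
    (hij : G.Adj i j) (hik : G.Adj i k) (hs : 0 < a i + a j) (ht : a i + a k < 0) : False :=
  not_isIntegralSet_of_isExposedSegment hij hik hij.ne' (by rintro rfl; linarith) hs ht
    (isExposedSegment_of_adj_of_adj hij hik) hint

lemma ne_of_pos_of_neg (hint : IsIntegralSet (edgePolytope G ∩ {x | 0 ≤ dotp a x}))
    (hij : G.Adj i j) (hkl : G.Adj k l) (hs : 0 < a i + a j) (ht : a k + a l < 0) :
    i ≠ k ∧ i ≠ l ∧ j ≠ k ∧ j ≠ l := by
  refine ⟨?_, ?_, ?_, ?_⟩ <;> rintro rfl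
  · exact false_of_adj_of_adj hint hij hkl hs ht
  · exact false_of_adj_of_adj hint hij hkl.symm hs (by linarith)
  · exact false_of_adj_of_adj hint hij.symm hkl (by linarith) ht
  · exact false_of_adj_of_adj hint hij.symm hkl.symm (by linarith) (by linarith)

lemma adj_or_adj_of_pos_of_neg (hint : IsIntegralSet (edgePolytope G ∩ {x | 0 ≤ dotp a x}))
    (hij : G.Adj i j) (hkl : G.Adj k l) (hs : 0 < a i + a j) (ht : a k + a l < 0) :
    G.Adj j k ∨ G.Adj j l := by
  obtain ⟨hik, hil, hjk, hjl⟩ := ne_of_pos_of_neg hint hij hkl hs ht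
  by_contra! h
  exact not_isIntegralSet_of_isExposedSegment hij hkl hjk hjl hs ht
    (isExposedSegment_of_not_adj hij hkl hik hil hjk hjl h.1 h.2) hint

lemma add_eq_zero_of_adj (hint : IsIntegralSet (edgePolytope G ∩ {x | 0 ≤ dotp a x}))
    (hij : G.Adj i j) (hkl : G.Adj k l) (hs : 0 < a i + a j) (ht : a k + a l < 0)
    (hik : G.Adj i k) : a i + a k = 0 := by
  rcases lt_trichotomy (a i + a k) 0 with h | h | h
  · exact (false_of_adj_of_adj hint hij hik hs h).elim
  · exact h
  · exact (false_of_adj_of_adj hint hik.symm hkl (by linarith) ht).elim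

/-- Without either matching, one of `i, j, k, l` has no neighbour on the other edge, and
`isExposedSegment_of_not_adj` applies (to `-a` for `k` and `l`). -/
lemma adj_and_adj_of_pos_of_neg (hP : IsIntegralSet (edgePolytope G ∩ {x | 0 ≤ dotp a x}))
    (hN : IsIntegralSet (edgePolytope G ∩ {x | dotp a x ≤ 0}))
    (hij : G.Adj i j) (hkl : G.Adj k l) (hs : 0 < a i + a j) (ht : a k + a l < 0) :
    (G.Adj i k ∧ G.Adj j l) ∨ (G.Adj i l ∧ G.Adj j k) := by
  have hs' : 0 < (-a) l + (-a) k := by simp only [Pi.neg_apply]; linarith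
  have ht' : (-a) i + (-a) j < 0 := by simp only [Pi.neg_apply]; linarith
  have hi := adj_or_adj_of_pos_of_neg hP hij.symm hkl (by linarith) ht
  have hj := adj_or_adj_of_pos_of_neg hP hij hkl hs ht
  have hk := adj_or_adj_of_pos_of_neg (isIntegralSet_neg hN) hkl.symm hij hs' ht'
  have hl := adj_or_adj_of_pos_of_neg (isIntegralSet_neg hN) hkl hij (by linarith) ht'
  simp only [G.adj_comm k, G.adj_comm l] at hk hl
  tauto

lemma eq_neg_of_pos_of_neg (hP : IsIntegralSet (edgePolytope G ∩ {x | 0 ≤ dotp a x}))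
    (hN : IsIntegralSet (edgePolytope G ∩ {x | dotp a x ≤ 0}))
    (hij : G.Adj i j) (hkl : G.Adj k l) (hs : 0 < a i + a j) (ht : a k + a l < 0) :
    (a i = -a k ∧ a j = -a l) ∨ (a i = -a l ∧ a j = -a k) := by
  have hji : 0 < a j + a i := by linarith
  have hlk : a l + a k < 0 := by linarith
  rcases adj_and_adj_of_pos_of_neg hP hN hij hkl hs ht with ⟨hik, hjl⟩ | ⟨hil, hjk⟩
  · have := add_eq_zero_of_adj hP hij hkl hs ht hik
    have := add_eq_zero_of_adj hP hij.symm hkl.symm hji hlk hjl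
    exact .inl ⟨by linarith, by linarith⟩
  · have := add_eq_zero_of_adj hP hij hkl.symm hs hlk hil
    have := add_eq_zero_of_adj hP hij.symm hkl hji ht hjk
    exact .inr ⟨by linarith, by linarith⟩

end Combinatorics

lemma SimpleGraph.Reachable.mem_of_forall_adj {V : Type*} {G : SimpleGraph V} {S : Set V}
    (hS : ∀ u v, G.Adj u v → u ∈ S → v ∈ S) {u v : V} (h : G.Reachable u v) (hu : u ∈ S) :
    v ∈ S := by
  obtain ⟨p⟩ := h
  induction p with
  | nil => exact hu
  | cons h _ ih => exact ih (hS _ _ h hu)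

section Weights

variable {d : ℕ} {G : SimpleGraph (Fin d)} {a : Fin d → ℝ}

lemma exists_adj_pos {y : Fin d → ℝ} (hy : y ∈ edgePolytope G) (hpos : 0 < dotp a y) :
    ∃ i j, G.Adj i j ∧ 0 < a i + a j ∧ a i ≠ 0 := by
  obtain ⟨i, j, hij, hs⟩ : ∃ i j, G.Adj i j ∧ 0 < a i + a j := by
    by_contra! h
    exact (dotp_le_of_mem_edgePolytope h hy).not_gt hpos
  by_cases hi : a i = 0
  · exact ⟨j, i, hij.symm, by linarith, by linarith⟩
  · exact ⟨i, j, hij, hs, hi⟩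

lemma exists_adj_neg {y : Fin d → ℝ} (hy : y ∈ edgePolytope G) (hneg : dotp a y < 0) :
    ∃ k l, G.Adj k l ∧ a k + a l < 0 := by
  obtain ⟨k, l, hkl, ht, -⟩ := exists_adj_pos (a := -a) hy (by rwa [dotp_neg_left, neg_pos])
  exact ⟨k, l, hkl, by simp only [Pi.neg_apply] at ht; linarith⟩

def HasEdgeWeights (G : SimpleGraph (Fin d)) (a : Fin d → ℝ) (α β : ℝ) : Prop :=
  ∀ p q, G.Adj p q →
    (0 < a p + a q → (a p = α ∧ a q = β) ∨ (a p = β ∧ a q = α)) ∧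
    (a p + a q < 0 → (a p = -α ∧ a q = -β) ∨ (a p = -β ∧ a q = -α))

lemma hasEdgeWeights {i j k l : Fin d}
    (hP : IsIntegralSet (edgePolytope G ∩ {x | 0 ≤ dotp a x}))
    (hN : IsIntegralSet (edgePolytope G ∩ {x | dotp a x ≤ 0}))
    (hij : G.Adj i j) (hkl : G.Adj k l) (hs : 0 < a i + a j) (ht : a k + a l < 0) :
    HasEdgeWeights G a (a i) (a j) := by
  intro p q hpq
  refine ⟨fun hpos => ?_, fun hneg => ?_⟩
  · rcases eq_neg_of_pos_of_neg hP hN hpq hkl hpos ht with ⟨h₁, h₂⟩ | ⟨h₁, h₂⟩ <;>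
    rcases eq_neg_of_pos_of_neg hP hN hij hkl hs ht with ⟨h₃, h₄⟩ | ⟨h₃, h₄⟩ <;>
    first
      | exact .inl ⟨by linarith, by linarith⟩
      | exact .inr ⟨by linarith, by linarith⟩
  · rcases eq_neg_of_pos_of_neg hP hN hij hpq hs hneg with ⟨h₁, h₂⟩ | ⟨h₁, h₂⟩
    · exact .inl ⟨by linarith, by linarith⟩
    · exact .inr ⟨by linarith, by linarith⟩

lemma HasEdgeWeights.add_comp_eq_mul {α β c : ℝ} {f : ℝ → ℝ} (hw : HasEdgeWeights G a α β)
    (hf : ∀ x, f (-x) = -f x) (hc : f α + f β = c * (α + β)) {p q : Fin d} (hpq : G.Adj p q) :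
    f (a p) + f (a q) = c * (a p + a q) := by
  rcases lt_trichotomy (a p + a q) 0 with h | h | h
  · rcases (hw p q hpq).2 h with ⟨hp, hq⟩ | ⟨hp, hq⟩ <;> rw [hp, hq, hf, hf] <;> linarith
  · rw [h, eq_neg_of_add_eq_zero_right h, hf]
    ring
  · rcases (hw p q hpq).1 h with ⟨hp, hq⟩ | ⟨hp, hq⟩ <;> rw [hp, hq] <;> linarith

lemma HasEdgeWeights.eq_zero_of_adj {α : ℝ} (hw : HasEdgeWeights G a α α) (hα : α ≠ 0)
    {p q : Fin d} (hpq : G.Adj p q) (hp : a p = 0) : a q = 0 := by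
  rcases lt_trichotomy (a p + a q) 0 with h | h | h
  · rcases (hw p q hpq).2 h with ⟨h', -⟩ | ⟨h', -⟩ <;> exact absurd (by linarith) hα
  · linarith
  · rcases (hw p q hpq).1 h with ⟨h', -⟩ | ⟨h', -⟩ <;> exact absurd (by linarith) hα

lemma decomposes_of_add_eq_mul {a' : Fin d → ℝ} {c : ℝ} (hc : 0 < c)
    (h : ∀ p q, G.Adj p q → a' p + a' q = c * (a p + a q))
    (hdec : Decomposes (edgePolytope G) a 0) :
    Decomposes (edgePolytope G) a' 0 ∧
      edgePolytope G ∩ {x | 0 ≤ dotp a' x} = edgePolytope G ∩ {x | 0 ≤ dotp a x} ∧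
      edgePolytope G ∩ {x | dotp a' x ≤ 0} = edgePolytope G ∩ {x | dotp a x ≤ 0} := by
  have hx (x : Fin d → ℝ) (hx : x ∈ edgePolytope G) : dotp a' x = c * dotp a x :=
    dotp_eq_mul_of_mem_edgePolytope h hx
  have hpos : edgePolytope G ∩ {x | 0 ≤ dotp a' x} = edgePolytope G ∩ {x | 0 ≤ dotp a x} :=
    Set.ext fun x => and_congr_right fun hxP => by
      simp only [Set.mem_ofPred_eq, hx x hxP, mul_nonneg_iff_of_pos_left hc]
  have hneg : edgePolytope G ∩ {x | dotp a' x ≤ 0} = edgePolytope G ∩ {x | dotp a x ≤ 0} :=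
    Set.ext fun x => and_congr_right fun hxP => by
      simp only [Set.mem_ofPred_eq, hx x hxP, ← neg_nonneg, ← mul_neg,
        mul_nonneg_iff_of_pos_left hc]
  obtain ⟨⟨x₀, hx₀, h₀⟩, ⟨y₁, hy₁, h₁⟩, ⟨y₂, hy₂, h₂⟩, hi₁, hi₂⟩ := hdec
  refine ⟨⟨⟨x₀, hx₀, ?_⟩, ⟨y₁, hy₁, ?_⟩, ⟨y₂, hy₂, ?_⟩, hpos ▸ hi₁, hneg ▸ hi₂⟩, hpos, hneg⟩
  · rw [hx x₀ (intrinsicInterior_subset hx₀), h₀, mul_zero]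
  · rw [hx y₁ hy₁]; exact mul_neg_of_pos_of_neg hc h₁
  · rw [hx y₂ hy₂]; exact mul_pos hc h₂

def IsTypeI (G : SimpleGraph (Fin d)) (a : Fin d → ℝ) : Prop :=
  (∀ t, a t ≠ 0) ∧
    (∀ i j, G.Adj i j → 0 < a i + a j → a i = 1 ∧ a j = 1) ∧
    (∀ i j, G.Adj i j → a i + a j < 0 → a i = -1 ∧ a j = -1)

def IsTypeII (G : SimpleGraph (Fin d)) (a : Fin d → ℝ) : Prop :=
  (∃ t, a t = 0) ∧
    (∀ i j, G.Adj i j → 0 < a i + a j → (a i = 1 ∧ a j = 0) ∨ (a i = 0 ∧ a j = 1)) ∧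
    (∀ i j, G.Adj i j → a i + a j < 0 → (a i = -1 ∧ a j = 0) ∨ (a i = 0 ∧ a j = -1))

lemma isTypeI_sign {α c : ℝ} {v : Fin d} (hG : G.Connected) (hw : HasEdgeWeights G a α α)
    (hα : 0 < α) (hv : a v ≠ 0) (hc : 0 < c)
    (hsum : ∀ p q, G.Adj p q → Real.sign (a p) + Real.sign (a q) = c * (a p + a q)) :
    IsTypeI G (fun t => Real.sign (a t)) := by
  refine ⟨fun t ht => hv ?_, fun p q hpq h => ?_, fun p q hpq h => ?_⟩
  · exact (hG.preconnected t v).mem_of_forall_adj (S := {u | a u = 0})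
      (fun _ _ h => hw.eq_zero_of_adj hα.ne' h) (Real.sign_eq_zero_iff.1 ht)
  · rw [hsum p q hpq] at h
    rcases (hw p q hpq).1 (pos_of_mul_pos_right h hc.le) with ⟨hp, hq⟩ | ⟨hp, hq⟩ <;>
      simp [hp, hq, Real.sign_of_pos hα]
  · rw [hsum p q hpq] at h
    rcases (hw p q hpq).2 (neg_of_mul_neg_right h hc.le) with ⟨hp, hq⟩ | ⟨hp, hq⟩ <;>
      simp [hp, hq, Real.sign_of_neg (neg_neg_of_pos hα)]

noncomputable def oddIndicator (γ x : ℝ) : ℝ := if x = γ then 1 else if x = -γ then -1 else 0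

lemma oddIndicator_self (γ : ℝ) : oddIndicator γ γ = 1 := if_pos rfl

lemma oddIndicator_of_ne {γ x : ℝ} (h : x ≠ γ) (h' : x ≠ -γ) : oddIndicator γ x = 0 := by
  simp [oddIndicator, h, h']

lemma oddIndicator_neg {γ : ℝ} (hγ : γ ≠ 0) (x : ℝ) : oddIndicator γ (-x) = -oddIndicator γ x := by
  have hγ' : -γ ≠ γ := fun h => hγ (by linarith)
  unfold oddIndicator
  by_cases h₁ : x = γ
  · simp [h₁, hγ']
  by_cases h₂ : x = -γ
  · simp [h₂, hγ']
  · have h₁' : -x ≠ -γ := fun h => h₁ (by linarith)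
    have h₂' : -x ≠ γ := fun h => h₂ (by linarith)
    simp [h₁, h₂, h₁', h₂']

lemma oddIndicator_mem (γ x : ℝ) :
    oddIndicator γ x = -1 ∨ oddIndicator γ x = 0 ∨ oddIndicator γ x = 1 := by
  unfold oddIndicator
  split_ifs <;> simp

lemma isTypeII_oddIndicator {α β c : ℝ} {v : Fin d} (hw : HasEdgeWeights G a α β)
    (hα : α ≠ 0) (hβ : β ≠ α) (hβ' : β ≠ -α) (hv : a v = β) (hc : 0 < c)
    (hsum : ∀ p q, G.Adj p q → oddIndicator α (a p) + oddIndicator α (a q) = c * (a p + a q)) :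
    IsTypeII G (fun t => oddIndicator α (a t)) := by
  have h₀ : oddIndicator α β = 0 := oddIndicator_of_ne hβ hβ'
  refine ⟨⟨v, by simp only [hv, h₀]⟩, fun p q hpq h => ?_, fun p q hpq h => ?_⟩
  · rw [hsum p q hpq] at h
    rcases (hw p q hpq).1 (pos_of_mul_pos_right h hc.le) with ⟨hp, hq⟩ | ⟨hp, hq⟩ <;>
      simp [hp, hq, h₀, oddIndicator_self]
  · rw [hsum p q hpq] at h
    rcases (hw p q hpq).2 (neg_of_mul_neg_right h hc.le) with ⟨hp, hq⟩ | ⟨hp, hq⟩ <;>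
      simp [hp, hq, h₀, oddIndicator_neg hα, oddIndicator_self]

end Weights

/-- every decomposition arises from a weighting with values in {-1,0,1}
which is of Type I (no zero weight, positive edges have weights {1,1}, negative edges
{-1,-1}) or of Type II (some zero weight, positive edges have weights {1,0}, negative
edges {-1,0}). -/
theorem stmt8 {d : ℕ} (G : SimpleGraph (Fin d)) (hG : G.Connected) (a : Fin d → ℝ)
    (hdec : Decomposes (edgePolytope G) a 0) :
    ∃ a' : Fin d → ℝ, (∀ t, a' t = -1 ∨ a' t = 0 ∨ a' t = 1) ∧
      Decomposes (edgePolytope G) a' 0 ∧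
      edgePolytope G ∩ {x | 0 ≤ dotp a' x} = edgePolytope G ∩ {x | 0 ≤ dotp a x} ∧
      edgePolytope G ∩ {x | dotp a' x ≤ 0} = edgePolytope G ∩ {x | dotp a x ≤ 0} ∧
      (((∀ t, a' t ≠ 0) ∧
        (∀ i j, G.Adj i j → 0 < a' i + a' j → a' i = 1 ∧ a' j = 1) ∧
        (∀ i j, G.Adj i j → a' i + a' j < 0 → a' i = -1 ∧ a' j = -1)) ∨
       ((∃ t, a' t = 0) ∧
        (∀ i j, G.Adj i j → 0 < a' i + a' j →
          ((a' i = 1 ∧ a' j = 0) ∨ (a' i = 0 ∧ a' j = 1))) ∧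
        (∀ i j, G.Adj i j → a' i + a' j < 0 →
          ((a' i = -1 ∧ a' j = 0) ∨ (a' i = 0 ∧ a' j = -1))))) := by
  obtain ⟨y₁, hy₁, hneg⟩ := hdec.2.1
  obtain ⟨y₂, hy₂, hpos⟩ := hdec.2.2.1
  have hP := hdec.2.2.2.1
  have hN := hdec.2.2.2.2
  obtain ⟨i, j, hij, hs, hi⟩ := exists_adj_pos hy₂ hpos
  obtain ⟨k, l, hkl, ht⟩ := exists_adj_neg hy₁ hneg
  have hw := hasEdgeWeights hP hN hij hkl hs ht
  by_cases hji : a j = a i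
  · rw [hji] at hw
    have hα : 0 < a i := by linarith
    have hc : 0 < (a i)⁻¹ := inv_pos.2 hα
    have hsum p q (hpq : G.Adj p q) :=
      hw.add_comp_eq_mul (c := (a i)⁻¹) (fun _ => Real.sign_neg)
        (by rw [Real.sign_of_pos hα]; field_simp) hpq
    obtain ⟨hdec', h₁, h₂⟩ := decomposes_of_add_eq_mul hc hsum hdec
    exact ⟨_, fun t => Real.sign_apply_eq _, hdec', h₁, h₂,
      .inl (isTypeI_sign hG hw hα hi hc hsum)⟩
  · have hc : 0 < (a i + a j)⁻¹ := inv_pos.2 hs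
    have hsum p q (hpq : G.Adj p q) :=
      hw.add_comp_eq_mul (c := (a i + a j)⁻¹) (oddIndicator_neg hi)
        (by rw [oddIndicator_self, oddIndicator_of_ne hji (by intro h; linarith)]; field_simp; ring)
        hpq
    obtain ⟨hdec', h₁, h₂⟩ := decomposes_of_add_eq_mul hc hsum hdec
    exact ⟨_, fun t => oddIndicator_mem _ _, hdec', h₁, h₂,
      .inr (isTypeII_oddIndicator hw hi hji (by intro h; linarith) rfl hc hsum)⟩
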